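/- Suppose δ = 0, λ10 > 1, the inequality λ20/λ10 + λ21·(1 − 1/λ10) > 1 + δ does NOT hold, and λ10/λ20 − λ21·(1 − 1/λ20) > 1. Then there is no point (u1,u2) in the interior of Λ (i.e., with u1 > 0, u2 > 0 and u1 + u2 < 1) satisfying F1(u1,u2) = 0 and F2(u1,u2) = 0. -/

import Mathlib

open Filter Topology Set

/-- Mean-field vector field of the generalized stacked contact process. -/
noncomputable def meanField (l10 l20 l21 δ : ℝ) (p : ℝ × ℝ) : ℝ × ℝ :=
  (l10 * p.1 * (1 - p.1 - p.2) - p.1 + δ * p.2 - l21 * p.1 * p.2,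
   l20 * p.2 * (1 - p.1 - p.2) - p.2 - δ * p.2 + l21 * p.1 * p.2)

/-- The feasible region Λ. -/
def lambdaRegion : Set (ℝ × ℝ) := {p | 0 ≤ p.1 ∧ 0 ≤ p.2 ∧ p.1 + p.2 ≤ 1}

/-- The region Λ₊ : if δ = 0 both coordinates positive, if δ > 0 only u₂ > 0. -/
def lambdaPlus (δ : ℝ) : Set (ℝ × ℝ) :=
  {p | p ∈ lambdaRegion ∧ 0 < p.2 ∧ (δ = 0 → 0 < p.1)}

/-- A solution of the mean-field ODE on [0,∞). -/
def IsSolution (l10 l20 l21 δ : ℝ) (u : ℝ → ℝ × ℝ) : Prop :=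
  ∀ t : ℝ, 0 ≤ t → HasDerivWithinAt u (meanField l10 l20 l21 δ (u t)) (Set.Ici 0) t

theorem meanField_fst_of_delta_eq_zero (l10 l20 l21 : ℝ) (p : ℝ × ℝ) :
    (meanField l10 l20 l21 0 p).1 = p.1 * (l10 * (1 - p.1 - p.2) - 1 - l21 * p.2) := by
  simp only [meanField]
  ring

theorem meanField_snd (l10 l20 l21 δ : ℝ) (p : ℝ × ℝ) :
    (meanField l10 l20 l21 δ p).2 = p.2 * (l20 * (1 - p.1 - p.2) - 1 - δ + l21 * p.1) := by
  simp only [meanField]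
  ring

theorem one_lt_div_add_mul_one_sub_one_div_iff {a b c : ℝ} (hb : 0 < b) :
    1 < a / b + c * (1 - 1 / b) ↔ b < a + c * (b - 1) := by
  rw [show a / b + c * (1 - 1 / b) = (a + c * (b - 1)) / b by field_simp, one_lt_div hb]

/-- Eliminating `1 - u1 - u2` gives `λ10 + λ21 - λ20 = λ21 (1 + λ20 u2 + λ10 u1)` and
`λ21 u2 (λ10 + λ21 - λ20) = λ21 (λ10 - 1) - (λ10 - λ20)`. The successful invasion makes
`λ10 + λ21 - λ20`, hence `λ21`, positive; the failed one makes the right side nonpositive. -/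
theorem not_per_capita_rates_eq_zero {l10 l20 l21 u1 u2 : ℝ} (h20 : 0 ≤ l20) (h21 : 0 ≤ l21)
    (hu2 : 0 < u2) (hfail : l20 + l21 * (l10 - 1) ≤ l10) (hin : l20 + l21 * (l20 - 1) < l10)
    (h1 : l10 * (1 - u1 - u2) - 1 - l21 * u2 = 0) (h2 : l20 * (1 - u1 - u2) - 1 + l21 * u1 = 0) :
    False := by
  have hgap : 0 < l10 + l21 - l20 := by nlinarith [mul_nonneg h21 h20]
  have hgap_eq : l21 * (1 + l20 * u2 + l10 * u1) = l10 + l21 - l20 := by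
    linear_combination l10 * h2 - l20 * h1
  have hl21 : 0 < l21 := by
    refine h21.lt_of_ne ?_
    rintro rfl
    linarith
  have hneg : l21 * u2 * (l10 + l21 - l20) ≤ 0 := by
    linear_combination hfail + (l20 - l21) * h1 - l10 * h2
  have hpos : 0 < l21 * u2 * (l10 + l21 - l20) := by positivity
  linarith

theorem no_interior_equilibrium_general
    (l10 l20 l21 δ : ℝ) (h20 : 0 < l20) (h21 : 0 ≤ l21)
    (hδ0 : δ = 0) (h10gt : 1 < l10)
    (h2in1fail : ¬ (l20 / l10 + l21 * (1 - 1 / l10) > 1 + δ))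
    (h1in2 : l10 / l20 - l21 * (1 - 1 / l20) > 1) :
    ¬ ∃ p : ℝ × ℝ, (0 < p.1 ∧ 0 < p.2 ∧ p.1 + p.2 < 1) ∧
      (meanField l10 l20 l21 δ p).1 = 0 ∧ (meanField l10 l20 l21 δ p).2 = 0 := by
  rintro ⟨⟨u1, u2⟩, ⟨hu1, hu2, -⟩, e1, e2⟩
  subst hδ0
  rw [meanField_fst_of_delta_eq_zero, mul_eq_zero, or_iff_right hu1.ne'] at e1
  rw [meanField_snd, mul_eq_zero, or_iff_right hu2.ne', sub_zero] at e2
  have hfail : l20 + l21 * (l10 - 1) ≤ l10 := by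
    rwa [gt_iff_lt, add_zero, one_lt_div_add_mul_one_sub_one_div_iff (by linarith), not_lt]
      at h2in1fail
  have hin : l20 + l21 * (l20 - 1) < l10 := by
    rw [sub_eq_add_neg, ← neg_mul, gt_iff_lt, one_lt_div_add_mul_one_sub_one_div_iff h20]
      at h1in2
    linarith
  exact not_per_capita_rates_eq_zero h20.le h21 hu2 hfail hin e1 e2

/-- If δ = 0, λ10 > 1, the (2s invade 1s) inequality fails and the (1s invade 2s)
inequality holds, there is no interior equilibrium. -/
theorem no_interior_equilibrium
    (l10 l20 l21 δ : ℝ) (h10 : 0 ≤ l10) (h20 : 0 < l20) (h21 : 0 ≤ l21) (hδ : 0 ≤ δ)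
    (hδ0 : δ = 0) (h10gt : 1 < l10)
    (h2in1fail : ¬ (l20 / l10 + l21 * (1 - 1 / l10) > 1 + δ))
    (h1in2 : l10 / l20 - l21 * (1 - 1 / l20) > 1) :
    ¬ ∃ p : ℝ × ℝ, (0 < p.1 ∧ 0 < p.2 ∧ p.1 + p.2 < 1) ∧
      (meanField l10 l20 l21 δ p).1 = 0 ∧ (meanField l10 l20 l21 δ p).2 = 0 :=
  no_interior_equilibrium_general l10 l20 l21 δ h20 h21 hδ0 h10gt h2in1fail h1in2
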